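/- Positivity of Ξ₁ beyond the critical point x† (step in the proof of Lemma 2). Let λ > 0 and c > 0, define Ξ₁(G) := 2λ · ∫_G^∞ e^{−λg}/ln(1 + c·g) dg − e^{−λG}/ln(1 + c·G), and let x† be the unique zero in (0, ∞) of x ↦ c/(1 + c·x) − λ·ln(1 + c·x). Then Ξ₁(G) > 0 for every G > x†. -/

import Mathlib

/-!
Write `L(x) = log (1 + c x)` and `h(x) = L(x) e^{-λx}`. Then
`h'(x) = e^{-λx} (c / (1 + c x) - λ L(x))`, and the bracket is strictly decreasing and vanishes
at `x†`, so `h` is strictly decreasing on `[x†, ∞)`. Since `e^{-λg} / L(g) = e^{-2λg} / h(g)`,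
for `g > G > x†` the integrand exceeds `e^{-2λg} / h(G)`, whose integral over `(G, ∞)` is
exactly `e^{-λG} / (2λ L(G))`.
-/

open MeasureTheory Set Real

theorem setIntegral_lt_setIntegral_of_forall_lt {X : Type*} [MeasurableSpace X] {μ : Measure X}
    {s : Set X} {f g : X → ℝ} (hs : MeasurableSet s) (hμs : μ s ≠ 0)
    (hf : IntegrableOn f s μ) (hg : IntegrableOn g s μ) (hlt : ∀ x ∈ s, f x < g x) :
    ∫ x in s, f x ∂μ < ∫ x in s, g x ∂μ := by
  rw [← sub_pos, ← integral_sub hg hf, setIntegral_pos_iff_support_of_nonneg_ae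
    (ae_restrict_of_forall_mem hs fun x hx => (sub_pos.2 (hlt x hx)).le) (hg.sub hf),
    inter_eq_self_of_subset_right
      (show s ⊆ Function.support fun x => g x - f x from fun x hx => (sub_pos.2 (hlt x hx)).ne')]
  exact pos_iff_ne_zero.2 hμs

theorem exp_neg_mul_div_lt_mul_setIntegral_Ioi_of_strictAntiOn {b G : ℝ} {H : ℝ → ℝ}
    (hb : 0 < b) (hpos : ∀ g ∈ Ici G, 0 < H g) (hanti : StrictAntiOn H (Ici G))
    (hint : IntegrableOn (fun g => exp (-b * g) / H g) (Ioi G)) :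
    exp (-b * G) / H G < b * ∫ g in Ioi G, exp (-b * g) / H g := by
  have hHG : 0 < H G := hpos G self_mem_Ici
  have hlower : ∫ g in Ioi G, exp (-b * g) / H G = exp (-b * G) / H G / b := by
    rw [integral_div, integral_exp_mul_Ioi (neg_lt_zero.2 hb)]
    field_simp
  have hlt : ∫ g in Ioi G, exp (-b * g) / H G < ∫ g in Ioi G, exp (-b * g) / H g := by
    refine setIntegral_lt_setIntegral_of_forall_lt measurableSet_Ioi (by simp)
      ((exp_neg_integrableOn_Ioi G hb).div_const _) hint fun g hg => ?_
    exact div_lt_div_of_pos_left (exp_pos _) (hpos g (Ioi_subset_Ici_self hg))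
      (hanti self_mem_Ici (Ioi_subset_Ici_self hg) hg)
  rw [hlower, div_lt_iff₀ hb] at hlt
  linarith

theorem hasDerivAt_log_one_add_mul_mul_exp_neg_mul {c lam x : ℝ} (hx : 0 < 1 + c * x) :
    HasDerivAt (fun y => log (1 + c * y) * exp (-lam * y))
      (exp (-lam * x) * (c / (1 + c * x) - lam * log (1 + c * x))) x := by
  have hlog : HasDerivAt (fun y => log (1 + c * y)) (c / (1 + c * x)) x := by
    simpa using (((hasDerivAt_id x).const_mul c).const_add 1).log hx.ne'
  have hexp : HasDerivAt (fun y => exp (-lam * y)) (exp (-lam * x) * -lam) x := by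
    simpa using ((hasDerivAt_id x).const_mul (-lam)).exp
  exact (hlog.mul hexp).congr_deriv (by ring)

theorem strictAntiOn_div_one_add_mul_sub_mul_log {c lam : ℝ} (hc : 0 < c) (hlam : 0 ≤ lam) :
    StrictAntiOn (fun x => c / (1 + c * x) - lam * log (1 + c * x)) (Ici 0) := by
  intro x hx y _ hxy
  have hx1 : 0 < 1 + c * x := by nlinarith [mem_Ici.1 hx]
  have hxy1 : 1 + c * x < 1 + c * y := by nlinarith
  have hdiv : c / (1 + c * y) < c / (1 + c * x) := div_lt_div_of_pos_left hc hx1 hxy1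
  have hlog : log (1 + c * x) ≤ log (1 + c * y) := log_le_log hx1 hxy1.le
  simp only
  nlinarith

theorem strictAntiOn_log_one_add_mul_mul_exp_neg_mul {c lam x₀ : ℝ} (hc : 0 < c) (hlam : 0 ≤ lam)
    (hx₀ : 0 ≤ x₀) (hzero : c / (1 + c * x₀) - lam * log (1 + c * x₀) = 0) :
    StrictAntiOn (fun x => log (1 + c * x) * exp (-lam * x)) (Ici x₀) := by
  have hpos : ∀ x ∈ Ici x₀, 0 < 1 + c * x := fun x hx => by nlinarith [mem_Ici.1 hx]
  refine strictAntiOn_of_deriv_neg (convex_Ici x₀) (fun x hx =>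
    (hasDerivAt_log_one_add_mul_mul_exp_neg_mul (hpos x hx)).continuousAt.continuousWithinAt)
    fun x hx => ?_
  rw [interior_Ici] at hx
  have hneg : c / (1 + c * x) - lam * log (1 + c * x) < 0 := hzero ▸
    strictAntiOn_div_one_add_mul_sub_mul_log hc hlam hx₀ (hx₀.trans (le_of_lt hx)) hx
  rw [(hasDerivAt_log_one_add_mul_mul_exp_neg_mul (hpos x (Ioi_subset_Ici_self hx))).deriv]
  exact mul_neg_of_pos_of_neg (exp_pos _) hneg

theorem integrableOn_exp_neg_mul_div_log_one_add_mul {c lam G : ℝ} (hc : 0 < c) (hlam : 0 < lam)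
    (hG : 0 < G) : IntegrableOn (fun g => exp (-lam * g) / log (1 + c * g)) (Ioi G) := by
  have hlogG : 0 < log (1 + c * G) := log_pos (by nlinarith)
  refine ((exp_neg_integrableOn_Ioi G hlam).div_const (log (1 + c * G))).mono' ?_ ?_
  · refine ContinuousOn.aestronglyMeasurable (fun x hx => ?_) measurableSet_Ioi
    have hx1 : 1 < 1 + c * x := by nlinarith [mem_Ioi.1 hx]
    have hcont : ContinuousAt (fun g => log (1 + c * g)) x :=
      ContinuousAt.log (f := fun g => 1 + c * g) (by fun_prop) (by linarith)
    exact ((continuous_exp.comp (continuous_const_mul (-lam))).continuousAt.div hcont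
      (log_pos hx1).ne').continuousWithinAt
  · refine ae_restrict_of_forall_mem measurableSet_Ioi fun g hg => ?_
    have hlogle : log (1 + c * G) ≤ log (1 + c * g) :=
      log_le_log (by nlinarith) (by nlinarith [mem_Ioi.1 hg])
    rw [Real.norm_eq_abs, abs_of_nonneg (div_nonneg (exp_pos _).le (hlogG.trans_le hlogle).le)]
    exact div_le_div_of_nonneg_left (exp_pos _).le hlogG hlogle

theorem Xi1_pos_beyond_critical_general (lam c : ℝ) (hlam : 0 < lam) (hc : 0 < c)
    (xd : ℝ) (hxd : 0 < xd)
    (hzero : c / (1 + c * xd) - lam * Real.log (1 + c * xd) = 0) :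
    ∀ G : ℝ, xd < G →
      0 < 2 * lam * (∫ g in Set.Ioi G, Real.exp (-lam * g) / Real.log (1 + c * g)) -
        Real.exp (-lam * G) / Real.log (1 + c * G) := by
  intro G hG
  have hGpos : 0 < G := hxd.trans hG
  have hsplit : ∀ g, exp (-(2 * lam) * g) / (log (1 + c * g) * exp (-lam * g)) =
      exp (-lam * g) / log (1 + c * g) := fun g => by
    rw [show -(2 * lam) * g = -lam * g + -lam * g by ring, exp_add,
      mul_div_mul_right _ _ (exp_pos _).ne']
  have hpos : ∀ g ∈ Ici G, 0 < log (1 + c * g) * exp (-lam * g) := fun g hg =>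
    mul_pos (log_pos (by nlinarith [mem_Ici.1 hg])) (exp_pos _)
  have hanti := (strictAntiOn_log_one_add_mul_mul_exp_neg_mul hc hlam.le hxd.le hzero).mono
    (Ici_subset_Ici.2 hG.le)
  have key := exp_neg_mul_div_lt_mul_setIntegral_Ioi_of_strictAntiOn (b := 2 * lam)
    (by positivity) hpos hanti
    (by simpa only [hsplit] using integrableOn_exp_neg_mul_div_log_one_add_mul hc hlam hGpos)
  simp only [hsplit] at key
  linarith

/-- Positivity of `Ξ₁` beyond the critical point `x†` (step in the proof of Lemma 2):
with `Ξ₁(G) = 2λ·∫_G^∞ e^{−λg}/ln(1+c·g) dg − e^{−λG}/ln(1+c·G)` and `x†` the unique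
zero in `(0, ∞)` of `x ↦ c/(1+c·x) − λ·ln(1+c·x)`, one has `Ξ₁(G) > 0` for every
`G > x†`. -/
theorem Xi1_pos_beyond_critical (lam c : ℝ) (hlam : 0 < lam) (hc : 0 < c)
    (xd : ℝ) (hxd : 0 < xd)
    (hzero : c / (1 + c * xd) - lam * Real.log (1 + c * xd) = 0)
    (huniq : ∀ y : ℝ, 0 < y → c / (1 + c * y) - lam * Real.log (1 + c * y) = 0 → y = xd) :
    ∀ G : ℝ, xd < G →
      0 < 2 * lam * (∫ g in Set.Ioi G, Real.exp (-lam * g) / Real.log (1 + c * g)) -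
        Real.exp (-lam * G) / Real.log (1 + c * G) :=
  Xi1_pos_beyond_critical_general lam c hlam hc xd hxd hzero
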